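/- Let v ∈ ℝ³ with v ≠ 0, and write ṽ := v/|v|. Then: (i) the derivative of the map v ↦ v̂ = v/√(1+|v|²) in the radial direction ṽ equals ṽ/(1+|v|²)^{3/2}, while its derivative in each rotational direction eᵢ×ṽ (i = 1,2,3) equals (eᵢ×ṽ)/(1+|v|²)^{1/2}; (ii) every u ∈ ℝ³ decomposes as u = ṽ·(ṽ·u) + Σ_{i=1}^{3} (eᵢ×ṽ)·((eᵢ×ṽ)·u). -/

import Mathlib

open scoped RealInnerProductSpace

noncomputable section

abbrev E3 : Type := EuclideanSpace ℝ (Fin 3)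

/-- The relativistic velocity `v̂ = v / √(1+|v|²)`. -/
def vhat (v : E3) : E3 := (Real.sqrt (1 + ‖v‖ ^ 2))⁻¹ • v

/-- The standard orthonormal basis vectors `e₁, e₂, e₃` of `ℝ³`. -/
def stdB (i : Fin 3) : E3 := EuclideanSpace.single i (1 : ℝ)

/-- The cross product on `ℝ³`. -/
def cross3 (a b : E3) : E3 :=
  EuclideanSpace.single 0 (a 1 * b 2 - a 2 * b 1) +
    EuclideanSpace.single 1 (a 2 * b 0 - a 0 * b 2) +
    EuclideanSpace.single 2 (a 0 * b 1 - a 1 * b 0)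

/-!
The product rule applied to `v̂ = (1 + |v|²)^{-1/2} v` gives
`Dv̂(v) w = (1 + |v|²)^{-1/2} w - (1 + |v|²)^{-3/2} ⟪v, w⟫ v`.
The correction term vanishes in the rotational directions `eᵢ × ṽ`, which are orthogonal to `v`,
while in the radial direction it turns `(1 + |v|²)^{-1/2}` into
`(1 + |v|²)^{-1/2} (1 - |v|² / (1 + |v|²)) = (1 + |v|²)^{-3/2}`.
The decomposition is the identity `∑ᵢ (eᵢ × n)(eᵢ × n)ᵀ = |n|² I - n nᵀ` at the unit vector `n = ṽ`.
-/

section RelativisticVelocity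

variable {E : Type*} [NormedAddCommGroup E] [InnerProductSpace ℝ E]

theorem hasFDerivAt_inv_sqrt_one_add_norm_sq_smul (v : E) :
    HasFDerivAt (fun x : E => (√(1 + ‖x‖ ^ 2))⁻¹ • x)
      (((1 + ‖v‖ ^ 2) ^ (1 / 2 : ℝ))⁻¹ • ContinuousLinearMap.id ℝ E -
        ((1 + ‖v‖ ^ 2) ^ (3 / 2 : ℝ))⁻¹ • (innerSL ℝ v).smulRight v) v := by
  have hq : 0 < 1 + ‖v‖ ^ 2 := by positivity
  have hfun : (fun x : E => (√(1 + ‖x‖ ^ 2))⁻¹ • x) =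
      (fun x : E => (1 + ‖x‖ ^ 2) ^ (-(1 / 2) : ℝ)) • id := by
    funext x
    simp [Real.sqrt_eq_rpow, Real.rpow_neg (by positivity : (0 : ℝ) ≤ 1 + ‖x‖ ^ 2)]
  rw [hfun]
  refine (((hasFDerivAt_id v).norm_sq.const_add 1).rpow_const (.inl hq.ne')).smul
    (hasFDerivAt_id v) |>.congr_fderiv ?_
  ext w
  rw [show (-(1 / 2) - 1 : ℝ) = -(3 / 2) by norm_num]
  simp only [id_eq, one_div, Real.rpow_neg hq.le, ContinuousLinearMap.comp_id, add_apply,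
    sub_apply, smul_apply, ContinuousLinearMap.id_apply, ContinuousLinearMap.smulRight_apply,
    coe_innerSL_apply, nsmul_eq_mul, smul_eq_mul]
  module

end RelativisticVelocity

section CrossProduct

variable (a b : E3)

theorem cross3_apply_zero : cross3 a b 0 = a 1 * b 2 - a 2 * b 1 := by simp [cross3]

theorem cross3_apply_one : cross3 a b 1 = a 2 * b 0 - a 0 * b 2 := by simp [cross3]

theorem cross3_apply_two : cross3 a b 2 = a 0 * b 1 - a 1 * b 0 := by simp [cross3]

theorem inner_E3 : ⟪a, b⟫ = a 0 * b 0 + a 1 * b 1 + a 2 * b 2 := by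
  simp [PiLp.inner_apply, Fin.sum_univ_three, mul_comm]

theorem cross3_smul_right (t : ℝ) : cross3 a (t • b) = t • cross3 a b := by
  ext j
  fin_cases j <;>
    simp only [Fin.zero_eta, Fin.mk_one, Fin.reduceFinMk, PiLp.smul_apply, smul_eq_mul,
      cross3_apply_zero, cross3_apply_one, cross3_apply_two] <;> ring

theorem inner_cross3_self_right : ⟪b, cross3 a b⟫ = 0 := by
  rw [inner_E3, cross3_apply_zero, cross3_apply_one, cross3_apply_two]; ring

theorem sum_inner_cross3_stdB_smul (n u : E3) :
    ∑ i : Fin 3, ⟪cross3 (stdB i) n, u⟫ • cross3 (stdB i) n = ‖n‖ ^ 2 • u - ⟪n, u⟫ • n := by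
  rw [← real_inner_self_eq_norm_sq]
  ext j
  fin_cases j <;>
    simp only [Fin.zero_eta, Fin.mk_one, Fin.reduceFinMk, Fin.sum_univ_three, PiLp.add_apply,
      PiLp.sub_apply, PiLp.smul_apply, smul_eq_mul, inner_E3, cross3_apply_zero, cross3_apply_one,
      cross3_apply_two, stdB, PiLp.single_apply, Fin.isValue, Fin.reduceEq, ↓reduceIte] <;> ring

end CrossProduct

theorem fderiv_vhat_apply (v w : E3) :
    fderiv ℝ vhat v w =
      ((1 + ‖v‖ ^ 2) ^ (1 / 2 : ℝ))⁻¹ • w - (((1 + ‖v‖ ^ 2) ^ (3 / 2 : ℝ))⁻¹ * ⟪v, w⟫) • v := by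
  have hd : HasFDerivAt vhat _ v := hasFDerivAt_inv_sqrt_one_add_norm_sq_smul v
  rw [hd.fderiv]
  simp [smul_smul]

theorem fderiv_vhat_apply_self (v : E3) :
    fderiv ℝ vhat v v = ((1 + ‖v‖ ^ 2) ^ (3 / 2 : ℝ))⁻¹ • v := by
  have hq : 0 < 1 + ‖v‖ ^ 2 := by positivity
  have h32 : (1 + ‖v‖ ^ 2) ^ (3 / 2 : ℝ) = (1 + ‖v‖ ^ 2) * (1 + ‖v‖ ^ 2) ^ (1 / 2 : ℝ) := by
    rw [show (3 / 2 : ℝ) = 1 + 1 / 2 by norm_num, Real.rpow_add hq, Real.rpow_one]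
  rw [fderiv_vhat_apply, real_inner_self_eq_norm_sq, ← sub_smul, h32]
  congr 1
  have : 0 < (1 + ‖v‖ ^ 2) ^ (1 / 2 : ℝ) := by positivity
  field_simp
  ring

theorem fderiv_vhat_apply_of_inner_eq_zero {v w : E3} (h : ⟪v, w⟫ = 0) :
    fderiv ℝ vhat v w = ((1 + ‖v‖ ^ 2) ^ (1 / 2 : ℝ))⁻¹ • w := by
  rw [fderiv_vhat_apply, h, mul_zero, zero_smul, sub_zero]

/-- Anisotropy of `∇_v v̂`: radial derivative decays like `(1+|v|²)^{-3/2}`, rotational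
derivatives like `(1+|v|²)^{-1/2}`; and the radial/rotational decomposition of vectors. -/
theorem stmt6 (v : E3) (hv : v ≠ 0) :
    fderiv ℝ vhat v (‖v‖⁻¹ • v) = ((1 + ‖v‖ ^ 2) ^ ((3 : ℝ) / 2))⁻¹ • (‖v‖⁻¹ • v) ∧
      (∀ i : Fin 3,
        fderiv ℝ vhat v (cross3 (stdB i) (‖v‖⁻¹ • v)) =
          ((1 + ‖v‖ ^ 2) ^ ((1 : ℝ) / 2))⁻¹ • cross3 (stdB i) (‖v‖⁻¹ • v)) ∧
      (∀ u : E3,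
        u = ⟪‖v‖⁻¹ • v, u⟫ • (‖v‖⁻¹ • v) +
          ∑ i : Fin 3, ⟪cross3 (stdB i) (‖v‖⁻¹ • v), u⟫ • cross3 (stdB i) (‖v‖⁻¹ • v)) := by
  have hunit : ‖‖v‖⁻¹ • v‖ = 1 := by simpa using norm_smul_inv_norm (𝕜 := ℝ) hv
  refine ⟨?_, fun i => ?_, fun u => ?_⟩
  · rw [map_smul, fderiv_vhat_apply_self, smul_comm]
  · refine fderiv_vhat_apply_of_inner_eq_zero ?_
    rw [cross3_smul_right, real_inner_smul_right, inner_cross3_self_right, mul_zero]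
  · rw [sum_inner_cross3_stdB_smul, hunit, one_pow, one_smul, add_sub_cancel]
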